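/- arXiv:1604.02473 — 6 statements merged into one kernel-verified Lean document; each statement's English description precedes it below -/
import Mathlib

section
/- Every infinite crowded subset of ℚ (with the subspace topology from ℝ) contains an infinite perfect subset, i.e., a subset of ℚ that is closed in ℚ and crowded. -/
/-!
Starting from any point of `S`, build an infinitely branching tree of points of `S` with
shrinking closed balls around them: the `n`-th child of a node lies within `1 / (n + 1)` of it,
and the ball of a child is nested in that of its parent. The children of every node converge to
it, so the set `P` of nodes is crowded. A point of the closure of `P` outside `P` lies in the balls
of a whole branch, and if the radius at depth `k` is below `(2 q)⁻¹ ^ k`, where `q` is the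
denominator of the node, such a point is a Liouville number. Hence it is irrational, and `P` is
closed in `ℚ`.
-/

/-- A subset of a topological space is *crowded* if it has no isolated points. -/
def CrowdedIn {α : Type*} [TopologicalSpace α] (S : Set α) : Prop :=
  ∀ x ∈ S, x ∈ closure (S \ {x})

open Set Metric

theorem CrowdedIn.infinite {α : Type*} [TopologicalSpace α] [T1Space α] {S : Set α}
    (hS : CrowdedIn S) (hne : S.Nonempty) : S.Infinite := by
  intro hfin
  obtain ⟨x, hx⟩ := hne
  have hx' := hS x hx
  rw [(hfin.subset sdiff_subset).isClosed.closure_eq] at hx'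
  exact hx'.2 rfl

theorem exists_tree_of_forall_exists {β : Type*} (P : ℕ → β → Prop) (R : ℕ → β → β → Prop)
    {b : β} (hb : P 0 b) (step : ∀ k b, P k b → ∀ n, ∃ b', P (k + 1) b' ∧ R n b' b) :
    ∃ t : List ℕ → β, (∀ σ, P σ.length (t σ)) ∧ ∀ n σ, R n (t (n :: σ)) (t σ) := by
  choose! f hf using step
  let t : List ℕ → β := fun σ => σ.rec b fun n σ tσ => f σ.length tσ n
  have ht : ∀ σ, P σ.length (t σ) := by
    intro σ
    induction σ with
    | nil => exact hb
    | cons n σ ih => exact (hf _ _ ih n).1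
  exact ⟨t, ht, fun n σ => (hf _ _ (ht σ) n).2⟩

structure IsBallTree {α : Type*} [MetricSpace α] (x : List ℕ → α) (r : List ℕ → ℝ) : Prop where
  radius_pos : ∀ σ, 0 < r σ
  cons_ne : ∀ n σ, x (n :: σ) ≠ x σ
  dist_cons_add_le_radius : ∀ n σ, dist (x (n :: σ)) (x σ) + r (n :: σ) ≤ r σ
  dist_cons_add_le_inv : ∀ n σ, dist (x (n :: σ)) (x σ) + r (n :: σ) ≤ 1 / (n + 1)

/-- Nodes are lists read from the end: the children of `σ` are `n :: σ` and its descendants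
are the `l ++ σ`. -/
def subtree {α : Type*} (x : List ℕ → α) (σ : List ℕ) : Set α :=
  range fun l => x (l ++ σ)

theorem subtree_subset_union {α : Type*} (x : List ℕ → α) (σ : List ℕ) (N : ℕ) :
    subtree x σ ⊆ {x σ} ∪ (⋃ n ∈ Finset.range N, subtree x (n :: σ)) ∪
      ⋃ n ≥ N, subtree x (n :: σ) := by
  rintro _ ⟨l, rfl⟩
  rcases List.eq_nil_or_concat l with rfl | ⟨l, n, rfl⟩
  · simp
  · have hmem : x (l.concat n ++ σ) ∈ subtree x (n :: σ) := ⟨l, by simp⟩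
    by_cases hn : n < N
    · exact Or.inl (Or.inr (mem_biUnion (Finset.mem_range.2 hn) hmem))
    · exact Or.inr (mem_biUnion (not_lt.1 hn) hmem)

namespace IsBallTree

variable {α : Type*} [MetricSpace α] {x : List ℕ → α} {r : List ℕ → ℝ}

theorem dist_append_add_le (h : IsBallTree x r) (l σ : List ℕ) :
    dist (x (l ++ σ)) (x σ) + r (l ++ σ) ≤ r σ := by
  induction l with
  | nil => simp
  | cons n l ih =>
    have := h.dist_cons_add_le_radius n (l ++ σ)
    have := dist_triangle (x (n :: (l ++ σ))) (x (l ++ σ)) (x σ)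
    rw [List.cons_append]
    linarith

theorem closure_subtree_subset (h : IsBallTree x r) (σ : List ℕ) :
    closure (subtree x σ) ⊆ closedBall (x σ) (r σ) := by
  refine closure_minimal ?_ isClosed_closedBall
  rintro _ ⟨l, rfl⟩
  have := h.dist_append_add_le l σ
  have := h.radius_pos (l ++ σ)
  rw [mem_closedBall]
  linarith

theorem subtree_cons_subset (h : IsBallTree x r) (n : ℕ) (σ : List ℕ) :
    subtree x (n :: σ) ⊆ closedBall (x σ) (1 / (n + 1)) := by
  rintro _ ⟨l, rfl⟩
  have := h.dist_append_add_le l (n :: σ)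
  have := h.dist_cons_add_le_inv n σ
  have := dist_triangle (x (l ++ n :: σ)) (x (n :: σ)) (x σ)
  have := h.radius_pos (l ++ n :: σ)
  change dist (x (l ++ n :: σ)) (x σ) ≤ _
  linarith

/-- The child subtrees of large index stay close to the root, so only finitely many of them
matter for a point away from the root. -/
theorem exists_mem_closure_subtree_cons (h : IsBallTree x r) {σ : List ℕ} {z : α}
    (hz : z ∈ closure (subtree x σ)) (hne : z ≠ x σ) :
    ∃ n, z ∈ closure (subtree x (n :: σ)) := by
  obtain ⟨N, hN⟩ := exists_nat_one_div_lt (dist_pos.2 hne)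
  have hfar : ⋃ n ≥ N, subtree x (n :: σ) ⊆ closedBall (x σ) (1 / (N + 1)) := by
    refine iUnion₂_subset fun n hn => (h.subtree_cons_subset n σ).trans ?_
    exact closedBall_subset_closedBall (by gcongr)
  have := closure_mono (subtree_subset_union x σ N) hz
  simp only [closure_union, closure_singleton, Finset.closure_biUnion] at this
  rcases this with (rfl | hz') | hz'
  · exact absurd rfl hne
  · obtain ⟨n, -, hn⟩ := mem_iUnion₂.1 hz'
    exact ⟨n, hn⟩
  · have := closure_minimal hfar isClosed_closedBall hz'
    rw [mem_closedBall] at this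
    exact absurd hN this.not_gt

theorem exists_length_eq_dist_le (h : IsBallTree x r) {z : α} (hz : z ∈ closure (range x))
    (hzx : z ∉ range x) (k : ℕ) : ∃ σ : List ℕ, σ.length = k ∧ dist z (x σ) ≤ r σ := by
  suffices ∃ σ : List ℕ, σ.length = k ∧ z ∈ closure (subtree x σ) by
    obtain ⟨σ, hσ, hzσ⟩ := this
    exact ⟨σ, hσ, h.closure_subtree_subset σ hzσ⟩
  induction k with
  | zero => exact ⟨[], rfl, by simpa [subtree] using hz⟩
  | succ k ih =>
    obtain ⟨σ, rfl, hzσ⟩ := ih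
    obtain ⟨n, hn⟩ := h.exists_mem_closure_subtree_cons hzσ fun hzσ => hzx ⟨σ, hzσ.symm⟩
    exact ⟨n :: σ, rfl, hn⟩

theorem crowdedIn_range (h : IsBallTree x r) : CrowdedIn (range x) := by
  rintro _ ⟨σ, rfl⟩
  refine Metric.mem_closure_iff.2 fun ε hε => ?_
  obtain ⟨n, hn⟩ := exists_nat_one_div_lt hε
  refine ⟨x (n :: σ), ⟨mem_range_self _, h.cons_ne n σ⟩, ?_⟩
  have := h.dist_cons_add_le_inv n σ
  have := h.radius_pos (n :: σ)
  rw [dist_comm]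
  linarith

end IsBallTree

theorem liouville_of_forall_exists_rat {z : ℝ}
    (h : ∀ N : ℕ, ∃ q : ℚ, (q : ℝ) ≠ z ∧ |z - q| < (2 * q.den : ℝ)⁻¹ ^ N) : Liouville z := by
  intro N
  obtain ⟨q, hne, hlt⟩ := h N
  have hq : ((2 * q.num : ℤ) : ℝ) / ((2 * q.den : ℤ) : ℝ) = q := by
    push_cast
    rw [mul_div_mul_left _ _ two_ne_zero]
    exact (Rat.cast_def q).symm
  refine ⟨2 * q.num, 2 * q.den, by have := q.den_pos; omega, ?_, ?_⟩ <;> rw [hq]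
  · exact hne.symm
  · rw [one_div, ← inv_pow]
    exact_mod_cast hlt

theorem IsBallTree.isClosed_range_rat {x : List ℕ → ℚ} {r : List ℕ → ℝ} (h : IsBallTree x r)
    (hr : ∀ σ, r σ < (2 * (x σ).den : ℝ)⁻¹ ^ σ.length) : IsClosed (range x) := by
  refine isClosed_of_closure_subset fun z hz => ?_
  by_contra hzx
  refine Rat.not_irrational z (Liouville.irrational (liouville_of_forall_exists_rat fun N => ?_))
  obtain ⟨σ, rfl, hσ⟩ := h.exists_length_eq_dist_le hz hzx N
  refine ⟨x σ, fun hxz => hzx ⟨σ, by exact_mod_cast hxz⟩, ?_⟩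
  rw [← Rat.dist_eq]
  exact hσ.trans_lt (hr σ)

theorem exists_isBallTree_rat {S : Set ℚ} (hS : CrowdedIn S) {y : ℚ} (hy : y ∈ S) :
    ∃ (x : List ℕ → ℚ) (r : List ℕ → ℝ), IsBallTree x r ∧ range x ⊆ S ∧
      ∀ σ, r σ < (2 * (x σ).den : ℝ)⁻¹ ^ σ.length := by
  let P : ℕ → ℚ × ℝ → Prop := fun k p => p.1 ∈ S ∧ 0 < p.2 ∧ p.2 < (2 * p.1.den : ℝ)⁻¹ ^ k
  let R : ℕ → ℚ × ℝ → ℚ × ℝ → Prop := fun n p' p =>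
    p'.1 ≠ p.1 ∧ dist p'.1 p.1 + p'.2 ≤ min p.2 (1 / (n + 1))
  have step : ∀ k p, P k p → ∀ n, ∃ p', P (k + 1) p' ∧ R n p' p := by
    rintro k ⟨q, ρ⟩ ⟨hq, hρ, -⟩ n
    set ε := min ρ (1 / (n + 1)) / 2
    have hε : 0 < ε := by positivity
    obtain ⟨y', ⟨hy'S, hy'q⟩, hy'⟩ := Metric.mem_closure_iff.1 (hS q hq) ε hε
    have hmin : 0 < min ε ((2 * y'.den : ℝ)⁻¹ ^ (k + 1)) := by positivity
    refine ⟨(y', min ε ((2 * y'.den : ℝ)⁻¹ ^ (k + 1)) / 2), ⟨hy'S, by positivity, ?_⟩, hy'q, ?_⟩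
    · linarith [min_le_right ε ((2 * y'.den : ℝ)⁻¹ ^ (k + 1))]
    · have := min_le_left ε ((2 * y'.den : ℝ)⁻¹ ^ (k + 1))
      have h2ε : min ρ (1 / (n + 1)) = 2 * ε := by ring
      rw [dist_comm] at hy'
      change dist y' q + _ ≤ min ρ (1 / (n + 1))
      linarith
  obtain ⟨t, ht, htR⟩ := exists_tree_of_forall_exists P R (b := (y, 1 / 2))
    ⟨hy, by norm_num, by norm_num⟩ step
  refine ⟨fun σ => (t σ).1, fun σ => (t σ).2, ⟨fun σ => (ht σ).2.1, fun n σ => (htR n σ).1,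
    fun n σ => (htR n σ).2.trans (min_le_left _ _), fun n σ => (htR n σ).2.trans (min_le_right _ _)⟩,
    range_subset_iff.2 fun σ => (ht σ).1, fun σ => (ht σ).2.2⟩

/-- Every infinite crowded subset of ℚ contains an infinite perfect
(closed in ℚ and crowded) subset. -/
theorem stmt1 (S : Set ℚ) (hinf : S.Infinite) (hcr : CrowdedIn S) :
    ∃ P : Set ℚ, P ⊆ S ∧ P.Infinite ∧ IsClosed P ∧ CrowdedIn P := by
  obtain ⟨y, hy⟩ := hinf.nonempty
  obtain ⟨x, r, hxr, hxS, hr⟩ := exists_isBallTree_rat hcr hy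
  exact ⟨range x, hxS, hxr.crowdedIn_range.infinite (range_nonempty x),
    hxr.isClosed_range_rat hr, hxr.crowdedIn_range⟩
end

section
/- The family P = {A ⊆ ℚ : A contains an infinite perfect subset of ℚ} is a coideal on ℚ. -/
/-- `A` contains an infinite perfect (closed in ℚ and crowded) subset. -/
def ContainsInfPerfect (A : Set ℚ) : Prop :=
  ∃ P : Set ℚ, P ⊆ A ∧ P.Infinite ∧ IsClosed P ∧ CrowdedIn P

open Set

section Crowded

variable {X : Type*} [TopologicalSpace X]

theorem CrowdedIn.inter_isOpen {C U : Set X} (hC : CrowdedIn C) (hU : IsOpen U) :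
    CrowdedIn (U ∩ C) := by
  intro x hx
  have := hU.inter_closure ⟨hx.1, hC x hx.2⟩
  rwa [← inter_sdiff_assoc] at this

theorem CrowdedIn.of_subset_closure [T1Space X] {C D : Set X} (hC : CrowdedIn C) (hDC : D ⊆ C)
    (hCD : C ⊆ closure D) : CrowdedIn D := by
  intro x hx
  have hsub : C \ {x} ⊆ closure (D \ {x}) := fun y hy => by
    simpa only [inter_comm, ← sdiff_eq] using
      isOpen_compl_singleton.inter_closure ⟨hy.2, hCD hy.1⟩
  exact closure_minimal hsub isClosed_closure (hC x (hDC hx))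

theorem CrowdedIn.infinite_s2 [T1Space X] {C : Set X} (hC : CrowdedIn C) (hne : C.Nonempty) :
    C.Infinite := by
  intro hfin
  obtain ⟨x, hx⟩ := hne
  have := hC x hx
  rw [hfin.sdiff.isClosed.closure_eq] at this
  exact this.2 rfl

theorem CrowdedIn.exists_subset_of_subset_union [T1Space X] {C A B : Set X} (hC : CrowdedIn C)
    (hne : C.Nonempty) (hAB : C ⊆ A ∪ B) :
    ∃ D : Set X, D.Nonempty ∧ CrowdedIn D ∧ (D ⊆ A ∨ D ⊆ B) := by
  by_cases hdense : C ⊆ closure (C \ A)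
  · refine ⟨C \ A, ?_, hC.of_subset_closure sdiff_subset hdense, Or.inr ?_⟩
    · by_contra hempty
      rw [not_nonempty_iff_eq_empty.1 hempty, closure_empty] at hdense
      exact hne.ne_empty (subset_empty_iff.1 hdense)
    · exact fun y hy => (hAB hy.1).resolve_left hy.2
  · obtain ⟨x, hxC, hx⟩ := not_subset.1 hdense
    refine ⟨(closure (C \ A))ᶜ ∩ C, ⟨x, hx, hxC⟩,
      hC.inter_isOpen isClosed_closure.isOpen_compl, Or.inl ?_⟩
    exact fun y hy => by_contra fun hyA => hy.1 (subset_closure ⟨hy.2, hyA⟩)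

end Crowded

section Construction

variable {X : Type*} [MetricSpace X]

-- All points chosen at later stages lie in `room`.
structure CrowdedStage (C : Set X) where
  pts : Finset X
  room : Set X
  isOpen_room : IsOpen room
  pts_subset : ↑pts ⊆ C ∩ room

theorem CrowdedIn.exists_next_stage {C : Set X} (hC : CrowdedIn C) (S : CrowdedStage C) (q : X)
    {ε : ℝ} (hε : 0 < ε) :
    ∃ S' : CrowdedStage C, S.pts ⊆ S'.pts ∧ S'.room ⊆ S.room ∧
      (∀ x ∈ S.pts, ∃ y ∈ S'.pts, y ≠ x ∧ dist y x < ε) ∧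
      (q ∈ S'.pts ∨ q ∉ closure S'.room) := by
  classical
  have hnbr : ∀ x ∈ S.pts, ∃ y ∈ S.room ∩ C, y ≠ x ∧ dist y x < ε := by
    intro x hx
    obtain ⟨y, ⟨hy, hyx⟩, hdist⟩ := Metric.mem_closure_iff.1
      (hC.inter_isOpen S.isOpen_room x ⟨(S.pts_subset hx).2, (S.pts_subset hx).1⟩) ε hε
    exact ⟨y, hy, hyx, by rwa [dist_comm]⟩
  choose! nbr hnbr_mem hnbr_ne hnbr_dist using hnbr
  set F := S.pts ∪ S.pts.image nbr
  have hF : ↑F ⊆ C ∩ S.room := by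
    intro y hy
    rcases Finset.mem_union.1 hy with hy | hy
    · exact S.pts_subset hy
    · obtain ⟨x, hx, rfl⟩ := Finset.mem_image.1 hy
      exact ⟨(hnbr_mem x hx).2, (hnbr_mem x hx).1⟩
  have hext : ∀ x ∈ S.pts, ∃ y ∈ F, y ≠ x ∧ dist y x < ε := fun x hx =>
    ⟨nbr x, Finset.mem_union_right _ (Finset.mem_image_of_mem _ hx), hnbr_ne x hx,
      hnbr_dist x hx⟩
  by_cases hq : q ∈ F
  · exact ⟨⟨F, S.room, S.isOpen_room, hF⟩, Finset.subset_union_left, subset_rfl, hext, Or.inl hq⟩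
  · obtain ⟨t, ht, htc, htF⟩ :=
      exists_mem_nhds_isClosed_subset (F.isClosed.isOpen_compl.mem_nhds hq)
    refine ⟨⟨F, S.room \ t, S.isOpen_room.sdiff htc,
      fun y hy => ⟨(hF hy).1, (hF hy).2, fun hyt => htF hyt hy⟩⟩,
      Finset.subset_union_left, sdiff_subset, hext, Or.inr fun hcl => ?_⟩
    obtain ⟨y, hyt, -, hyt'⟩ := mem_closure_iff_nhds.1 hcl t ht
    exact hyt' hyt

theorem CrowdedIn.exists_isClosed_subset [Countable X] {C : Set X} (hC : CrowdedIn C)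
    (hne : C.Nonempty) : ∃ P ⊆ C, P.Nonempty ∧ IsClosed P ∧ CrowdedIn P := by
  obtain ⟨x₀, hx₀⟩ := hne
  have : Nonempty X := ⟨x₀⟩
  obtain ⟨q, hq_surj⟩ := exists_surjective_nat X
  choose next hpts hroom hnbr hq using fun (n : ℕ) (S : CrowdedStage C) =>
    hC.exists_next_stage S (q n) (Nat.one_div_pos_of_nat (n := n))
  let S : ℕ → CrowdedStage C := fun n =>
    Nat.rec ⟨{x₀}, univ, isOpen_univ, by simpa using hx₀⟩ (fun n S => next n S) n
  have hpts_mono : Monotone fun n => (S n).pts := monotone_nat_of_le_succ fun n => hpts n (S n)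
  have hroom_anti : Antitone fun n => (S n).room :=
    antitone_nat_of_succ_le fun n => hroom n (S n)
  let P := ⋃ n, ((S n).pts : Set X)
  refine ⟨P, iUnion_subset fun n => (S n).pts_subset.trans inter_subset_left,
    ⟨x₀, mem_iUnion.2 ⟨0, by simp [S]⟩⟩, isClosed_of_closure_subset fun x hx => ?_, ?_⟩
  · obtain ⟨n, rfl⟩ := hq_surj x
    have hsub : P ⊆ ↑(S (n + 1)).pts ∪ (S (n + 1)).room := iUnion_subset fun m => by
      rcases le_total m (n + 1) with hm | hm
      · exact (Finset.coe_subset.2 (hpts_mono hm)).trans subset_union_left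
      · exact ((S m).pts_subset.trans inter_subset_right).trans
          ((hroom_anti hm).trans subset_union_right)
    have hcl := closure_mono hsub hx
    rw [closure_union, (S (n + 1)).pts.isClosed.closure_eq] at hcl
    exact mem_iUnion.2 ⟨n + 1, (hq n (S n)).elim id hcl.resolve_right⟩
  · intro x hx
    obtain ⟨n, hxn⟩ := mem_iUnion.1 hx
    refine Metric.mem_closure_iff.2 fun ε hε => ?_
    obtain ⟨k, hk⟩ := exists_nat_one_div_lt hε
    obtain ⟨y, hy, hyx, hdist⟩ :=
      hnbr (n + k) (S (n + k)) x (hpts_mono (Nat.le_add_right n k) hxn)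
    refine ⟨y, ⟨mem_iUnion.2 ⟨n + k + 1, hy⟩, hyx⟩, ?_⟩
    calc dist x y = dist y x := dist_comm x y
      _ < 1 / ((n + k : ℕ) + 1 : ℝ) := hdist
      _ ≤ 1 / ((k : ℝ) + 1) := Nat.one_div_le_one_div (Nat.le_add_left k n)
      _ < ε := hk

end Construction

theorem ContainsInfPerfect.mono {A B : Set ℚ} (h : ContainsInfPerfect A) (hAB : A ⊆ B) :
    ContainsInfPerfect B :=
  let ⟨P, hPA, hP⟩ := h
  ⟨P, hPA.trans hAB, hP⟩

theorem CrowdedIn.containsInfPerfect {C : Set ℚ} (hC : CrowdedIn C) (hne : C.Nonempty) :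
    ContainsInfPerfect C :=
  let ⟨P, hPC, hPne, hPcl, hP⟩ := hC.exists_isClosed_subset hne
  ⟨P, hPC, hP.infinite_s2 hPne, hPcl, hP⟩

/-- The family of subsets of ℚ containing an infinite perfect set is a coideal. -/
theorem stmt2 :
    (∅ ∉ {A : Set ℚ | ContainsInfPerfect A}) ∧
    (∀ A, ContainsInfPerfect A → ∀ B : Set ℚ, A ⊆ B → ContainsInfPerfect B) ∧
    (∀ A, ContainsInfPerfect A → ∀ A₀ A₁ : Set ℚ, A = A₀ ∪ A₁ →
      ContainsInfPerfect A₀ ∨ ContainsInfPerfect A₁) := by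
  refine ⟨?_, fun A hA B hAB => hA.mono hAB, ?_⟩
  · rintro ⟨P, hP, hinf, -⟩
    exact hinf.nonempty.ne_empty (subset_empty_iff.1 hP)
  · rintro A ⟨P, hPA, hPinf, -, hP⟩ A₀ A₁ rfl
    obtain ⟨D, hDne, hD, hDA | hDA⟩ := hP.exists_subset_of_subset_union hPinf.nonempty hPA
    · exact Or.inl ((hD.containsInfPerfect hDne).mono hDA)
    · exact Or.inr ((hD.containsInfPerfect hDne).mono hDA)
end

section
/- There exists a nonprincipal ultrafilter on ℚ with a base of perfect subsets of ℚ if and only if there exists an ultrafilter on ℚ⁺ (the positive rationals) with a base of sets that are perfect and unbounded (in the order sense) in ℚ⁺. -/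
/-- The positive rationals, as a (topological, ordered) subtype of ℚ. -/
abbrev Qpos := {q : ℚ // 0 < q}

/-!
By Cantor's back-and-forth theorem, every countable dense linear order without end points is
order-isomorphic, hence homeomorphic, to `ℚ⁺`, and homeomorphisms transport bases of perfect sets.
An ultrafilter on `ℚ⁺` whose members are all unbounded is not principal, which gives one direction.
Conversely, a nonprincipal ultrafilter `u` on `ℚ` contains, for every `c`, one of the rays
`Iio c`, `Ioi c`. Hence it contains the lower cut `L = {c | Ioi c ∈ u}` or the upper cut
`{c | Iio c ∈ u}`; in the first case `u` restricts to an ultrafilter on `L` converging to the top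
end of `L`, and `L ≃ₜ ℚ⁺` carries it to an ultrafilter converging to `+∞`. The second case is the
first one for the reversed order.
-/

open Filter Set Function

section PerfectBase

variable {X Y : Type*} [TopologicalSpace X] [TopologicalSpace Y]

def HasPerfectBase (u : Ultrafilter X) : Prop :=
  ∀ A ∈ u, ∃ P ∈ u, P ⊆ A ∧ IsClosed P ∧ CrowdedIn P

theorem CrowdedIn.image {s : Set X} (hs : CrowdedIn s) {f : X → Y} (hf : Continuous f)
    (hinj : Injective f) : CrowdedIn (f '' s) := by
  rintro _ ⟨x, hx, rfl⟩
  rw [← image_singleton, ← image_sdiff hinj]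
  exact hf.continuousWithinAt.mem_closure_image (hs x hx)

theorem CrowdedIn.preimage_val {s t : Set X} (hs : CrowdedIn s) (hst : s ⊆ t) :
    CrowdedIn (((↑) : t → X) ⁻¹' s) := by
  intro x hx
  rw [closure_subtype, image_sdiff Subtype.val_injective, image_singleton,
    image_preimage_eq_of_subset (by rwa [Subtype.range_coe])]
  exact hs x hx

theorem HasPerfectBase.map {u : Ultrafilter X} (hu : HasPerfectBase u) (e : X ≃ₜ Y) :
    HasPerfectBase (u.map e) := by
  intro A hA
  obtain ⟨P, hPu, hPA, hPc, hPcr⟩ := hu _ (Ultrafilter.mem_map.1 hA)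
  refine ⟨e '' P, ?_, image_subset_iff.2 hPA, e.isClosed_image.2 hPc,
    hPcr.image e.continuous e.injective⟩
  rwa [Ultrafilter.mem_map, e.preimage_image]

theorem HasPerfectBase.comap_val {u : Ultrafilter X} (hu : HasPerfectBase u) {t : Set X}
    (ht : t ∈ u) :
    HasPerfectBase
      (u.comap Subtype.val_injective (by rwa [Subtype.range_coe] : range ((↑) : t → X) ∈ u)) := by
  intro A hA
  obtain ⟨P, hPu, hPA, hPc, hPcr⟩ := hu _ ((Ultrafilter.mem_comap _ _ _).1 hA)
  have hPt : P ⊆ t := hPA.trans (image_subset_iff.2 fun x _ => x.2)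
  refine ⟨(↑) ⁻¹' P, ?_, ?_, hPc.preimage continuous_subtype_val, hPcr.preimage_val hPt⟩
  · rwa [Ultrafilter.mem_comap, image_preimage_eq_of_subset (by rwa [Subtype.range_coe])]
  · intro x hx
    obtain ⟨y, hy, hyx⟩ := hPA hx
    rwa [← Subtype.val_injective hyx]

end PerfectBase

section CountableDenseOrder

variable {α β : Type*} [LinearOrder α] [TopologicalSpace α] [OrderTopology α] [Countable α]
  [DenselyOrdered α] [NoMinOrder α]
  [LinearOrder β] [TopologicalSpace β] [OrderTopology β] [Countable β] [DenselyOrdered β]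
  [NoMinOrder β] [NoMaxOrder β] [Nonempty β]

theorem exists_hasPerfectBase_le_atTop_of_lowerCut_mem {u : Ultrafilter α}
    (hu : HasPerfectBase u) (hL : {c | Ioi c ∈ u} ∈ u) :
    ∃ v : Ultrafilter β, HasPerfectBase v ∧ ↑v ≤ (atTop : Filter β) := by
  set L := {c | Ioi c ∈ u}
  have hLlower : IsLowerSet L := fun a b hba ha => mem_of_superset ha (Ioi_subset_Ioi hba)
  have := hLlower.ordConnected
  have : Nonempty L := (Ultrafilter.nonempty_of_mem hL).to_subtype
  have : NoMaxOrder L := ⟨fun c =>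
    let ⟨d, hcd, hdL⟩ := Ultrafilter.nonempty_of_mem (inter_mem c.2 hL); ⟨⟨d, hdL⟩, hcd⟩⟩
  have : NoMinOrder L := ⟨fun c =>
    let ⟨d, hdc⟩ := exists_lt (c : α); ⟨⟨d, hLlower hdc.le c.2⟩, hdc⟩⟩
  obtain ⟨e⟩ := Order.iso_of_countable_dense L β
  have hLu : range ((↑) : L → α) ∈ u := by rwa [Subtype.range_coe]
  set w := u.comap Subtype.val_injective hLu
  have hw : ↑w ≤ (atTop : Filter L) := atTop_basis_Ioi.ge_iff.2 fun c _ => by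
    rw [Ultrafilter.mem_coe, Ultrafilter.mem_comap]
    refine mem_of_superset (inter_mem c.2 hL) fun d hd => ?_
    exact ⟨⟨d, hd.2⟩, hd.1, rfl⟩
  exact ⟨w.map e.toHomeomorph, (hu.comap_val hL).map _, e.tendsto_atTop.comp hw⟩

theorem exists_hasPerfectBase_le_atTop [NoMaxOrder α] {u : Ultrafilter α}
    (hu : HasPerfectBase u) (hnp : ∀ a, u ≠ pure a) :
    ∃ v : Ultrafilter β, HasPerfectBase v ∧ ↑v ≤ (atTop : Filter β) := by
  have hray : ∀ a, Iio a ∈ u ∨ Ioi a ∈ u := fun a => by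
    rw [← Ultrafilter.union_mem_iff, Iio_union_Ioi, Ultrafilter.compl_mem_iff_notMem]
    exact fun h => hnp a (Ultrafilter.eq_of_le (le_pure_iff.2 h))
  have hcuts : {c | Iio c ∈ u} ∈ u ∨ {c | Ioi c ∈ u} ∈ u := by
    rw [← Ultrafilter.union_mem_iff]
    exact mem_of_superset univ_mem fun a _ => hray a
  rcases hcuts with hU | hL
  · have : Countable αᵒᵈ := ‹Countable α›
    -- the upper cut of `u` is its lower cut in the reversed order
    exact exists_hasPerfectBase_le_atTop_of_lowerCut_mem (α := αᵒᵈ) (u := u) hu hU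
  · exact exists_hasPerfectBase_le_atTop_of_lowerCut_mem hu hL

end CountableDenseOrder

instance : OrderTopology Qpos := inferInstanceAs (OrderTopology (Ioi (0 : ℚ)))
instance : DenselyOrdered Qpos := inferInstanceAs (DenselyOrdered (Ioi (0 : ℚ)))
instance : NoMinOrder Qpos := inferInstanceAs (NoMinOrder (Ioi (0 : ℚ)))
instance : NoMaxOrder Qpos := inferInstanceAs (NoMaxOrder (Ioi (0 : ℚ)))

/-- There exists a nonprincipal ultrafilter on ℚ with a base of perfect subsets
iff there exists an ultrafilter on ℚ⁺ with a base of perfect unbounded sets. -/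
theorem stmt3 :
    (∃ u : Ultrafilter ℚ, (∀ q : ℚ, u ≠ pure q) ∧
      ∀ A ∈ u, ∃ X ∈ u, X ⊆ A ∧ IsClosed X ∧ CrowdedIn X) ↔
    (∃ v : Ultrafilter Qpos,
      ∀ A ∈ v, ∃ X ∈ v, X ⊆ A ∧ IsClosed X ∧ CrowdedIn X ∧
        ∀ b : ℚ, ∃ x ∈ X, b < (x : ℚ)) := by
  constructor
  · rintro ⟨u, hnp, hu⟩
    obtain ⟨v, hv, hv_top⟩ := exists_hasPerfectBase_le_atTop (β := Qpos) hu hnp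
    refine ⟨v, fun A hA => ?_⟩
    obtain ⟨P, hPv, hPA, hPc, hPcr⟩ := hv A hA
    refine ⟨P, hPv, hPA, hPc, hPcr, fun b => ?_⟩
    obtain ⟨x, hxP, hbx⟩ := Ultrafilter.nonempty_of_mem
      (inter_mem hPv (hv_top (Ioi_mem_atTop ⟨|b| + 1, by positivity⟩)))
    exact ⟨x, hxP, (le_abs_self b).trans_lt ((lt_add_one _).trans hbx)⟩
  · rintro ⟨v, hv⟩
    obtain ⟨e⟩ := Order.iso_of_countable_dense Qpos ℚ
    replace e : Qpos ≃ₜ ℚ := e.toHomeomorph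
    refine ⟨v.map e, fun q hq => ?_, HasPerfectBase.map (fun A hA => ?_) _⟩
    · obtain ⟨X, -, hXq, -, -, hX_unbdd⟩ := hv (e ⁻¹' {q}) (by
        rw [← Ultrafilter.mem_map, hq]; exact Ultrafilter.mem_pure.2 rfl)
      obtain ⟨x, hx, -⟩ := hX_unbdd 0
      obtain ⟨y, hy, hxy⟩ := hX_unbdd x
      exact hxy.ne (congrArg _ (e.injective ((hXq hx).trans (hXq hy).symm)))
    · obtain ⟨X, hXv, hXA, hXc, hXcr, -⟩ := hv A hA
      exact ⟨X, hXv, hXA, hXc, hXcr⟩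
end

section
/- For every crowded, unbounded (above) subset X ⊆ ℚ⁺ there exists a function f_X : ω → ω such that for every increasing g : ω → ω with g ≰* f_X (g(n) > f_X(n) for infinitely many n), the set X(g) is crowded and unbounded, hence a perfect unbounded subset of ℚ⁺. -/
open scoped Classical

/-- The set of positive rationals. -/
def QposSet : Set ℚ := {q : ℚ | 0 < q}

/-- `S` is closed in ℚ⁺ (with its subspace topology). -/
def ClosedInPos (S : Set ℚ) : Prop :=
  ∃ C : Set ℚ, IsClosed C ∧ S = C ∩ QposSet

/-- `S` is unbounded above. -/
def UnbAbove (S : Set ℚ) : Prop := ∀ b : ℚ, ∃ x ∈ S, b < x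

/-- The condition on `k` used in the definition of `Jset`: the interval
`(qₙ - √2/k, qₙ + √2/k)` avoids `q_m` for all `m ≤ f n`, `m ≠ n`. -/
def Jcond (q : ℕ → ℚ) (f : ℕ → ℕ) (n k : ℕ) : Prop :=
  0 < k ∧ ∀ m ≤ f n, m ≠ n →
    ¬((q n : ℝ) - Real.sqrt 2 / (k : ℝ) < (q m : ℝ) ∧
      (q m : ℝ) < (q n : ℝ) + Real.sqrt 2 / (k : ℝ))

/-- The clopen interval `Jₙ^f = (qₙ - √2/k, qₙ + √2/k) ∩ ℚ`, where `k` is least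
such that `q_m ∉ Jₙ^f` whenever `m ≤ f n` and `m ≠ n`. -/
noncomputable def Jset (q : ℕ → ℚ) (f : ℕ → ℕ) (n : ℕ) : Set ℚ :=
  if h : ∃ k : ℕ, Jcond q f n k then
    {x : ℚ | (q n : ℝ) - Real.sqrt 2 / (Nat.find h : ℝ) < (x : ℝ) ∧
      (x : ℝ) < (q n : ℝ) + Real.sqrt 2 / (Nat.find h : ℝ)}
  else ∅

/-- `X(f) = ℚ⁺ \ ⋃ {Jₙ^f : qₙ ∉ X}`. -/
noncomputable def XF (q : ℕ → ℚ) (f : ℕ → ℕ) (X : Set ℚ) : Set ℚ :=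
  QposSet \ ⋃ n ∈ {n : ℕ | q n ∉ X}, Jset q f n
/-! Each `Jₙ^f` is the ball of `ℚ` around `qₙ` with an irrational radius, hence clopen; so `X(g)`
is closed in `ℚ⁺`, and it lies inside `X` because `qₙ ∈ Jₙ^g`. At every stage `N` pick finitely many
points of `X`: one to the right of all `qₙ + 2`, `n < N`, and for each `j ≤ N` with `qⱼ ∈ X` one
within `1/(N+1)` of `qⱼ` outside the clopen sets `Jₙ^id`, `j < n < N`, which miss `qⱼ`; let `f_X(N)`
bound their indices. When `g(N) > f_X(N)`, a set `Jₙ^g` with `n ≥ N` misses all these points, since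
their indices are at most `g(N) ≤ g(n)`, while for `n < N` we have `Jₙ^g ⊆ Jₙ^id`. As this happens
for infinitely many `N`, `X(g)` is unbounded, and near any `qⱼ ∈ X(g)` it contains points
of `X \ {qⱼ}` close enough to `qⱼ` to miss the finitely many clopen `Jₙ^g`, `n ≤ j`, that miss `qⱼ`. -/

open Set Filter Metric Topology

theorem Rat.ball_eq_preimage_Ioo (x : ℚ) (r : ℝ) :
    ball x r = ((↑) : ℚ → ℝ) ⁻¹' Ioo (x - r) (x + r) := by
  rw [← Real.ball_eq_Ioo, (Isometry.of_dist_eq Rat.dist_cast).preimage_ball]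

theorem Rat.ball_eq_closedBall_of_irrational (x : ℚ) {r : ℝ} (hr : Irrational r) :
    ball x r = closedBall x r := by
  refine ball_subset_closedBall.antisymm fun y hy => ?_
  have hne : dist y x ≠ r := by
    rw [Rat.dist_eq, ← Rat.cast_sub, ← Rat.cast_abs]
    exact (hr.ne_rat _).symm
  exact lt_of_le_of_ne hy hne

section Jset

variable {q : ℕ → ℚ} {f g : ℕ → ℕ} {n : ℕ}

noncomputable def Jradius (q : ℕ → ℚ) (f : ℕ → ℕ) (n : ℕ) : ℝ :=
  if h : ∃ k : ℕ, Jcond q f n k then Real.sqrt 2 / Nat.find h else 0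

theorem Jset_eq_ball : Jset q f n = ball (q n) (Jradius q f n) := by
  unfold Jset Jradius
  split_ifs
  · ext x
    simp [Rat.ball_eq_preimage_Ioo]
  · simp

theorem Jcond_iff {k : ℕ} :
    Jcond q f n k ↔ 0 < k ∧ ∀ m ≤ f n, m ≠ n → q m ∉ ball (q n) (Real.sqrt 2 / k) := by
  simp [Jcond, Rat.ball_eq_preimage_Ioo]

theorem exists_Jcond (hinj : Function.Injective q) (f : ℕ → ℕ) (n : ℕ) :
    ∃ k : ℕ, Jcond q f n k := by
  set S : Set ℚ := q '' {m | m ≤ f n ∧ m ≠ n}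
  have hS : IsClosed S :=
    ((Set.finite_le_nat (f n)).subset fun m hm => hm.1).image q |>.isClosed
  have hnS : q n ∉ S := fun ⟨m, hm, hmn⟩ => hm.2 (hinj hmn)
  obtain ⟨ε, hε, hball⟩ := Metric.isOpen_iff.mp hS.isOpen_compl _ hnS
  obtain ⟨k, hk⟩ := exists_nat_gt (Real.sqrt 2 / ε)
  have hk0 : (0 : ℝ) < k := (div_pos (by positivity) hε).trans hk
  refine ⟨k, Jcond_iff.mpr ⟨Nat.cast_pos.mp hk0, fun m hm hmn hmem => ?_⟩⟩
  have hrad : Real.sqrt 2 / k < ε := (div_lt_comm₀ hk0 hε).mpr hk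
  exact hball (ball_subset_ball hrad.le hmem) ⟨m, ⟨hm, hmn⟩, rfl⟩

theorem Jradius_pos (hinj : Function.Injective q) : 0 < Jradius q f n := by
  have h := exists_Jcond hinj f n
  rw [Jradius, dif_pos h]
  exact div_pos (by positivity) (Nat.cast_pos.mpr (Nat.find_spec h).1)

theorem Jradius_le_sqrt_two : Jradius q f n ≤ Real.sqrt 2 := by
  unfold Jradius
  split_ifs with h
  · exact div_le_self (Real.sqrt_nonneg 2) (Nat.one_le_cast.mpr (Nat.find_spec h).1)
  · exact Real.sqrt_nonneg 2

theorem irrational_Jradius (hinj : Function.Injective q) : Irrational (Jradius q f n) := by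
  have h := exists_Jcond hinj f n
  rw [Jradius, dif_pos h]
  exact irrational_sqrt_two.div_natCast (Nat.pos_iff_ne_zero.mp (Nat.find_spec h).1)

theorem Jradius_anti (hinj : Function.Injective q) (hfg : f n ≤ g n) :
    Jradius q g n ≤ Jradius q f n := by
  have hf := exists_Jcond hinj f n
  have hg := exists_Jcond hinj g n
  have hle : Nat.find hf ≤ Nat.find hg := by
    obtain ⟨hpos, hP⟩ := Nat.find_spec hg
    exact Nat.find_min' hf ⟨hpos, fun m hm => hP m (hm.trans hfg)⟩
  rw [Jradius, Jradius, dif_pos hf, dif_pos hg]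
  gcongr
  exact Nat.cast_pos.mpr (Nat.find_spec hf).1

theorem Jset_anti (hinj : Function.Injective q) (hfg : f n ≤ g n) : Jset q g n ⊆ Jset q f n := by
  simp only [Jset_eq_ball]
  exact ball_subset_ball (Jradius_anti hinj hfg)

theorem isOpen_Jset : IsOpen (Jset q f n) := Jset_eq_ball ▸ isOpen_ball

theorem isClosed_Jset (hinj : Function.Injective q) : IsClosed (Jset q f n) := by
  rw [Jset_eq_ball, Rat.ball_eq_closedBall_of_irrational _ (irrational_Jradius hinj)]
  exact isClosed_closedBall

theorem mem_Jset_self (hinj : Function.Injective q) : q n ∈ Jset q f n :=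
  Jset_eq_ball ▸ mem_ball_self (Jradius_pos hinj)

theorem notMem_Jset_of_le {m : ℕ} (hm : m ≤ f n) (hmn : m ≠ n) : q m ∉ Jset q f n := by
  unfold Jset
  split_ifs with h
  · exact (Nat.find_spec h).2 m hm hmn
  · exact notMem_empty _

theorem notMem_Jset_of_add_two_le {x : ℚ} (hx : q n + 2 ≤ x) : x ∉ Jset q f n := by
  rw [Jset_eq_ball, mem_ball, Rat.dist_eq, not_lt]
  have hx' : (q n : ℝ) + 2 ≤ x := by exact_mod_cast hx
  have hsqrt : Real.sqrt 2 < 2 := by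
    rw [Real.sqrt_lt' two_pos]; norm_num
  calc Jradius q f n ≤ (x : ℝ) - q n := by linarith [Jradius_le_sqrt_two (q := q) (f := f) (n := n)]
    _ ≤ |(x : ℝ) - q n| := le_abs_self _

end Jset

section XF

variable {q : ℕ → ℚ} {g : ℕ → ℕ} {X : Set ℚ}

theorem XF_subset (hinj : Function.Injective q) (hran : range q = QposSet) : XF q g X ⊆ X := by
  intro x hx
  obtain ⟨j, rfl⟩ : x ∈ range q := hran ▸ hx.1
  by_contra hjX
  exact hx.2 (mem_biUnion hjX (mem_Jset_self hinj))

theorem closedInPos_XF : ClosedInPos (XF q g X) :=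
  ⟨(⋃ n ∈ {n | q n ∉ X}, Jset q g n)ᶜ, (isOpen_biUnion fun _ _ => isOpen_Jset).isClosed_compl,
    by rw [XF, sdiff_eq_compl_inter]⟩

theorem mem_XF_of_lt (hX : X ⊆ QposSet) (hg : Monotone g) {i N : ℕ} (hiX : q i ∈ X)
    (hiN : i < g N) (hlow : ∀ n < N, q n ∉ X → q i ∉ Jset q g n) : q i ∈ XF q g X := by
  refine ⟨hX hiX, ?_⟩
  simp only [mem_iUnion₂, mem_ofPred_eq, not_exists]
  intro n hnX
  rcases lt_or_ge n N with hnN | hNn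
  · exact hlow n hnN hnX
  · exact notMem_Jset_of_le (hiN.trans_le (hg hNn)).le fun h => hnX (h ▸ hiX)

theorem exists_far_point (hran : range q = QposSet) (hX : X ⊆ QposSet) (hub : UnbAbove X)
    (N : ℕ) : ∃ i, q i ∈ X ∧ (N : ℚ) < q i ∧ ∀ n < N, q n + 2 ≤ q i := by
  obtain ⟨B, hB⟩ := ((Finset.range N).image q).exists_le
  obtain ⟨x, hxX, hx⟩ := hub (max B N + 2)
  obtain ⟨i, rfl⟩ : x ∈ range q := hran ▸ hX hxX
  refine ⟨i, hxX, by linarith [le_max_right B N], fun n hn => ?_⟩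
  have := hB _ (Finset.mem_image_of_mem q (Finset.mem_range.2 hn))
  linarith [le_max_left B N]

theorem exists_near_point (hinj : Function.Injective q) (hran : range q = QposSet)
    (hX : X ⊆ QposSet) (hcr : CrowdedIn X) (j N : ℕ) :
    ∃ i, q j ∈ X → q i ∈ X ∧ q i ≠ q j ∧ dist (q i) (q j) < 1 / (N + 1) ∧
      ∀ n, j < n → n < N → q i ∉ Jset q id n := by
  by_cases hj : q j ∈ X
  swap
  · exact ⟨0, fun h => absurd h hj⟩
  have hU : ball (q j) (1 / (N + 1)) ∩ ⋂ n ∈ Finset.Ioo j N, (Jset q id n)ᶜ ∈ 𝓝 (q j) := by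
    refine inter_mem (ball_mem_nhds _ (by positivity)) ((biInter_finset_mem _).2 fun n hn => ?_)
    exact (isClosed_Jset hinj).isOpen_compl.mem_nhds
      (notMem_Jset_of_le (Finset.mem_Ioo.1 hn).1.le (Finset.mem_Ioo.1 hn).1.ne)
  obtain ⟨x, hxU, hxX, hxj⟩ := mem_closure_iff_nhds.mp (hcr _ hj) _ hU
  obtain ⟨i, rfl⟩ : x ∈ range q := hran ▸ hX hxX
  exact ⟨i, fun _ => ⟨hxX, hxj, hxU.1, fun n hjn hnN =>
    mem_iInter₂.1 hxU.2 n (Finset.mem_Ioo.2 ⟨hjn, hnN⟩)⟩⟩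

theorem crowdedIn_XF (hinj : Function.Injective q) (hran : range q = QposSet) (hX : X ⊆ QposSet)
    (hg : StrictMono g) {a : ℕ → ℕ → ℕ}
    (ha : ∀ j N, q j ∈ X → q (a j N) ∈ X ∧ q (a j N) ≠ q j ∧
      dist (q (a j N)) (q j) < 1 / (N + 1) ∧ ∀ n, j < n → n < N → q (a j N) ∉ Jset q id n)
    (hag : ∀ j, ∃ᶠ N in atTop, a j N < g N) : CrowdedIn (XF q g X) := by
  intro x hx
  obtain ⟨j, rfl⟩ : x ∈ range q := hran ▸ hx.1
  have hV : ⋂ n ∈ (Finset.range (j + 1)).filter (q · ∉ X), (Jset q g n)ᶜ ∈ 𝓝 (q j) :=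
    (biInter_finset_mem _).2 fun n hn => (isClosed_Jset hinj).isOpen_compl.mem_nhds
      fun h => hx.2 (mem_biUnion (Finset.mem_filter.1 hn).2 h)
  obtain ⟨ρ, hρ, hρV⟩ := Metric.mem_nhds_iff.1 hV
  rw [Metric.mem_closure_iff]
  intro ε hε
  have hsmall : ∀ᶠ N : ℕ in atTop, 1 / ((N : ℝ) + 1) < min ρ ε :=
    tendsto_one_div_add_atTop_nhds_zero_nat.eventually (gt_mem_nhds (lt_min hρ hε))
  obtain ⟨N, hN, hjN, hNsmall⟩ :=
    ((hag j).and_eventually ((eventually_ge_atTop j).and hsmall)).exists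
  obtain ⟨hiX, hij, hdist, havoid⟩ := ha j N (XF_subset hinj hran hx)
  have hclose := hdist.trans hNsmall
  refine ⟨q (a j N), ⟨mem_XF_of_lt hX hg.monotone hiX hN fun n hnN hnX => ?_, hij⟩, ?_⟩
  · rcases le_or_gt n j with hnj | hjn
    · exact mem_iInter₂.1 (hρV (mem_ball.2 (hclose.trans_le (min_le_left _ _)))) n
        (Finset.mem_filter.2 ⟨Finset.mem_range.2 (Nat.lt_succ_of_le hnj), hnX⟩)
    · exact fun h => havoid n hjn hnN (Jset_anti hinj hg.le_apply h)
  · rw [dist_comm]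
    exact hclose.trans_le (min_le_right _ _)

theorem unbAbove_XF (hX : X ⊆ QposSet) (hg : Monotone g) {w : ℕ → ℕ}
    (hwX : ∀ N, q (w N) ∈ X) (hwN : ∀ N : ℕ, (N : ℚ) < q (w N))
    (hw : ∀ N, ∀ n < N, q n + 2 ≤ q (w N)) (hwg : ∃ᶠ N in atTop, w N < g N) :
    UnbAbove (XF q g X) := by
  intro b
  obtain ⟨N, hN, hbN⟩ := (hwg.and_eventually (eventually_ge_atTop ⌈b⌉₊)).exists
  refine ⟨q (w N), mem_XF_of_lt hX hg (hwX N) hN fun n hn _ =>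
    notMem_Jset_of_add_two_le (hw N n hn), ?_⟩
  calc b ≤ ⌈b⌉₊ := Nat.le_ceil b
    _ ≤ N := by exact_mod_cast hbN
    _ < q (w N) := hwN N

end XF

/-- For every crowded unbounded `X ⊆ ℚ⁺` there is an `f_X : ω → ω` such that
for every increasing `g` with `g ≰* f_X`, the set `X(g)` is crowded, unbounded
and closed in ℚ⁺ (hence perfect unbounded). -/
theorem stmt11 (q : ℕ → ℚ) (hinj : Function.Injective q) (hran : Set.range q = QposSet)
    (X : Set ℚ) (hX : X ⊆ QposSet) (hcr : CrowdedIn X) (hub : UnbAbove X) :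
    ∃ fX : ℕ → ℕ, ∀ g : ℕ → ℕ, StrictMono g →
      (¬ ∀ᶠ n in Filter.atTop, g n ≤ fX n) →
      CrowdedIn (XF q g X) ∧ UnbAbove (XF q g X) ∧ ClosedInPos (XF q g X) := by
  choose w hwX hwN hw using exists_far_point hran hX hub
  choose a ha using exists_near_point hinj hran hX hcr
  refine ⟨fun N => max (w N) ((Finset.range (N + 1)).sup (a · N)), fun g hg hgf => ?_⟩
  have hfreq : ∃ᶠ N in atTop, max (w N) ((Finset.range (N + 1)).sup (a · N)) < g N := by
    simpa only [not_eventually, not_le] using hgf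
  have hag : ∀ j, ∃ᶠ N in atTop, a j N < g N := fun j =>
    (hfreq.and_eventually (eventually_ge_atTop j)).mono fun N ⟨hN, hjN⟩ =>
      ((Finset.le_sup (f := (a · N)) (Finset.mem_range.2 (Nat.lt_succ_of_le hjN))).trans
        (le_max_right _ _)).trans_lt hN
  exact ⟨crowdedIn_XF hinj hran hX hg ha hag,
    unbAbove_XF hX hg.monotone hwX hwN hw (hfreq.mono fun N hN => (le_max_left _ _).trans_lt hN),
    closedInPos_XF⟩
end

section
/- Every nonempty subset B of ℚ that contains a two-sided crowded subset has a maximal two-sided crowded subset C (the union of all two-sided crowded subsets of B), and C contains a two-sided perfect subset of ℚ. -/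
/-- `S` is two-sided crowded: every point of `S` is a two-sided limit of points of `S`. -/
def TwoSidedCrowded (S : Set ℚ) : Prop :=
  ∀ x ∈ S, ∀ ε : ℚ, 0 < ε →
    (∃ y ∈ S, x - ε < y ∧ y < x) ∧ (∃ z ∈ S, x < z ∧ z < x + ε)

/-!
The union of two-sided crowded sets is two-sided crowded, which gives the maximal set `C`.
For the perfect subset, enumerate `ℚ = {e 0, e 1, …}` and build, inside a nonempty two-sided
crowded `S`, finite sets `F₀ ⊆ F₁ ⊆ ⋯` together with closed sets `K₀ ⊆ K₁ ⊆ ⋯` disjoint from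
them. At step `n` every point of `Fₙ` receives neighbours on both sides within `1/(n+1)`, taken
from `S \ Kₙ` (still two-sided crowded, as `Kₙ` is closed); then, if `e n` has not been kept,
a closed neighbourhood of `e n` missing the finite set of kept points is added to `K`. The union
`P` of the `Fₙ` is two-sided crowded, and its complement is the open set `⋃ interior Kₙ`.
-/

namespace TwoSidedCrowded

variable {S : Set ℚ}

theorem sUnion {𝒮 : Set (Set ℚ)} (h𝒮 : ∀ S ∈ 𝒮, TwoSidedCrowded S) :
    TwoSidedCrowded (⋃₀ 𝒮) := by
  rintro x ⟨S, hS, hxS⟩ ε hε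
  obtain ⟨⟨y, hy, hy'⟩, ⟨z, hz, hz'⟩⟩ := h𝒮 S hS x hxS ε hε
  exact ⟨⟨y, ⟨S, hS, hy⟩, hy'⟩, ⟨z, ⟨S, hS, hz⟩, hz'⟩⟩

theorem inter_isOpen (hS : TwoSidedCrowded S) {U : Set ℚ} (hU : IsOpen U) :
    TwoSidedCrowded (S ∩ U) := by
  rintro x ⟨hxS, hxU⟩ ε hε
  obtain ⟨a, b, ⟨hax, hxb⟩, hab⟩ := mem_nhds_iff_exists_Ioo_subset.1 (hU.mem_nhds hxU)
  obtain ⟨⟨y, hyS, hy⟩, ⟨z, hzS, hz⟩⟩ :=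
    hS x hxS (min ε (min (x - a) (b - x))) (by simp [hε, hax, hxb])
  have hε' := min_le_left ε (min (x - a) (b - x))
  have hxa' := (min_le_right ε _).trans (min_le_left (x - a) (b - x))
  have hbx' := (min_le_right ε _).trans (min_le_right (x - a) (b - x))
  exact ⟨⟨y, ⟨hyS, hab ⟨by linarith, by linarith⟩⟩, by linarith, hy.2⟩,
    ⟨z, ⟨hzS, hab ⟨by linarith, by linarith⟩⟩, hz.1, by linarith⟩⟩

theorem exists_finset_two_sided_near (hS : TwoSidedCrowded S) {F : Finset ℚ} (hF : ↑F ⊆ S)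
    {ε : ℚ} (hε : 0 < ε) :
    ∃ G : Finset ℚ, F ⊆ G ∧ ↑G ⊆ S ∧
      ∀ p ∈ F, ∃ l ∈ G, ∃ u ∈ G, p - ε < l ∧ l < p ∧ p < u ∧ u < p + ε := by
  classical
  choose! l hlS hl using fun p (hp : p ∈ F) => (hS p (hF hp) ε hε).1
  choose! u huS hu using fun p (hp : p ∈ F) => (hS p (hF hp) ε hε).2
  refine ⟨F ∪ F.image l ∪ F.image u, ?_, ?_, fun p hp => ⟨l p, ?_, u p, ?_, (hl p hp).1,
    (hl p hp).2, (hu p hp).1, (hu p hp).2⟩⟩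
  · exact Finset.subset_union_left.trans Finset.subset_union_left
  · simp only [Finset.coe_union, Finset.coe_image, Set.union_subset_iff, Set.image_subset_iff]
    exact ⟨⟨hF, hlS⟩, huS⟩
  · exact Finset.mem_union_left _ (Finset.mem_union_right _ (Finset.mem_image_of_mem l hp))
  · exact Finset.mem_union_right _ (Finset.mem_image_of_mem u hp)

end TwoSidedCrowded

theorem exists_seq_of_forall_exists {α : Type*} (R : ℕ → α → α → Prop) (a : α)
    (h : ∀ n x, ∃ y, R n x y) : ∃ f : ℕ → α, f 0 = a ∧ ∀ n, R n (f n) (f (n + 1)) := by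
  choose g hg using h
  exact ⟨fun n => Nat.rec a g n, rfl, fun n => hg n _⟩

/-- A finite approximation to the closed crowded set: the points of `pts` are kept for good,
while no point of the closed set `removed` will ever be added. -/
structure Stage (S : Set ℚ) where
  pts : Finset ℚ
  removed : Set ℚ
  isClosed_removed : IsClosed removed
  pts_subset : ↑pts ⊆ S \ removed

namespace Stage

variable {S : Set ℚ}

def Refines (ε q : ℚ) (s t : Stage S) : Prop :=
  s.pts ⊆ t.pts ∧ s.removed ⊆ t.removed ∧
    (∀ p ∈ s.pts, ∃ l ∈ t.pts, ∃ u ∈ t.pts, p - ε < l ∧ l < p ∧ p < u ∧ u < p + ε) ∧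
    (q ∈ t.pts ∨ q ∈ interior t.removed)

theorem exists_refines (hS : TwoSidedCrowded S) {ε : ℚ} (hε : 0 < ε) (q : ℚ) (s : Stage S) :
    ∃ t : Stage S, s.Refines ε q t := by
  obtain ⟨G, hFG, hGS, hG⟩ :=
    (hS.inter_isOpen s.isClosed_removed.isOpen_compl).exists_finset_two_sided_near s.pts_subset hε
  by_cases hq : q ∈ G
  · exact ⟨⟨G, s.removed, s.isClosed_removed, hGS⟩, hFG, subset_rfl, hG, Or.inl hq⟩
  obtain ⟨V, hVq, hVcl, hVG⟩ :=
    exists_mem_nhds_isClosed_subset (G.finite_toSet.isClosed.isOpen_compl.mem_nhds hq)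
  refine ⟨⟨G, s.removed ∪ V, s.isClosed_removed.union hVcl, fun p hp => ⟨(hGS hp).1, ?_⟩⟩,
    hFG, Set.subset_union_left, hG,
    Or.inr (interior_mono Set.subset_union_right (mem_interior_iff_mem_nhds.2 hVq))⟩
  rintro (h | h)
  exacts [(hGS hp).2 h, hVG h hp]

def limit (s : ℕ → Stage S) : Set ℚ :=
  ⋃ n, ((s n).pts : Set ℚ)

theorem limit_subset (s : ℕ → Stage S) : limit s ⊆ S :=
  Set.iUnion_subset fun n _ hp => ((s n).pts_subset hp).1

def IsRefinementSeq (e : ℕ → ℚ) (s : ℕ → Stage S) : Prop :=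
  ∀ n : ℕ, (s n).Refines (1 / (n + 1)) (e n) (s (n + 1))

variable {s : ℕ → Stage S} {e : ℕ → ℚ}

theorem monotone_pts (hs : IsRefinementSeq e s) : Monotone fun n => (s n).pts :=
  monotone_nat_of_le_succ fun n => (hs n).1

theorem monotone_removed (hs : IsRefinementSeq e s) : Monotone fun n => (s n).removed :=
  monotone_nat_of_le_succ fun n => (hs n).2.1

theorem compl_limit (hs : IsRefinementSeq e s) (he : Function.Surjective e) :
    (limit s)ᶜ = ⋃ n, interior (s n).removed := by
  ext q
  simp only [limit, Set.mem_compl_iff, Set.mem_iUnion, not_exists]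
  constructor
  · intro hq
    obtain ⟨n, rfl⟩ := he q
    exact ⟨n + 1, (hs n).2.2.2.resolve_left (hq (n + 1))⟩
  · rintro ⟨n, hn⟩ m hm
    exact ((s (max n m)).pts_subset (monotone_pts hs (le_max_right n m) hm)).2
      (monotone_removed hs (le_max_left n m) (interior_subset hn))

theorem isClosed_limit (hs : IsRefinementSeq e s) (he : Function.Surjective e) :
    IsClosed (limit s) := by
  rw [← isOpen_compl_iff, compl_limit hs he]
  exact isOpen_iUnion fun n => isOpen_interior

theorem twoSidedCrowded_limit (hs : IsRefinementSeq e s) : TwoSidedCrowded (limit s) := by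
  intro p hp ε hε
  obtain ⟨m, hm⟩ := Set.mem_iUnion.1 hp
  obtain ⟨n, hn⟩ := exists_nat_one_div_lt hε
  obtain ⟨l, hl, u, hu, hlp, hpl, hpu, hup⟩ :=
    (hs (max m n)).2.2.1 p (monotone_pts hs (le_max_left m n) hm)
  have hmn : 1 / ((max m n : ℕ) + 1 : ℚ) ≤ 1 / (n + 1) := by
    gcongr
    exact le_max_right m n
  exact ⟨⟨l, Set.mem_iUnion.2 ⟨_, hl⟩, by linarith, hpl⟩,
    ⟨u, Set.mem_iUnion.2 ⟨_, hu⟩, hpu, by linarith⟩⟩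

end Stage

theorem TwoSidedCrowded.exists_isClosed_subset {S : Set ℚ} (hS : TwoSidedCrowded S)
    (hne : S.Nonempty) : ∃ P ⊆ S, P.Nonempty ∧ IsClosed P ∧ TwoSidedCrowded P := by
  obtain ⟨x, hx⟩ := hne
  obtain ⟨e, he⟩ := exists_surjective_nat ℚ
  let s₀ : Stage S := ⟨{x}, ∅, isClosed_empty, by simpa using hx⟩
  obtain ⟨s, hs₀, hs⟩ := exists_seq_of_forall_exists
    (fun n a b => a.Refines (1 / (n + 1)) (e n) b) s₀
    fun n => Stage.exists_refines hS (by positivity) (e n)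
  refine ⟨Stage.limit s, Stage.limit_subset s, ⟨x, Set.mem_iUnion.2 ⟨0, ?_⟩⟩,
    Stage.isClosed_limit hs he, Stage.twoSidedCrowded_limit hs⟩
  simp [hs₀, s₀]

theorem stmt17_general (B : Set ℚ)
    (h : ∃ S : Set ℚ, S ⊆ B ∧ S.Nonempty ∧ TwoSidedCrowded S) :
    ∃ C : Set ℚ, C ⊆ B ∧ TwoSidedCrowded C ∧
      (∀ S : Set ℚ, S ⊆ B → TwoSidedCrowded S → S ⊆ C) ∧
      C = ⋃₀ {S : Set ℚ | S ⊆ B ∧ TwoSidedCrowded S} ∧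
      ∃ P : Set ℚ, P ⊆ C ∧ P.Nonempty ∧ IsClosed P ∧ TwoSidedCrowded P := by
  obtain ⟨S, hSB, hSne, hS⟩ := h
  obtain ⟨P, hPS, hPne, hPcl, hP⟩ := hS.exists_isClosed_subset hSne
  refine ⟨⋃₀ {S : Set ℚ | S ⊆ B ∧ TwoSidedCrowded S}, Set.sUnion_subset fun T hT => hT.1,
    TwoSidedCrowded.sUnion fun T hT => hT.2, fun T hTB hT => Set.subset_sUnion_of_mem ⟨hTB, hT⟩,
    rfl, P, Set.subset_sUnion_of_mem ⟨hPS.trans hSB, hP⟩, hPne, hPcl, hP⟩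

/-- Every nonempty `B ⊆ ℚ` containing a (nonempty) two-sided crowded subset has a
maximal two-sided crowded subset `C` (the union of all two-sided crowded subsets of
`B`), and `C` contains a (nonempty) two-sided perfect subset of ℚ. -/
theorem stmt17 (B : Set ℚ) (hne : B.Nonempty)
    (h : ∃ S : Set ℚ, S ⊆ B ∧ S.Nonempty ∧ TwoSidedCrowded S) :
    ∃ C : Set ℚ, C ⊆ B ∧ TwoSidedCrowded C ∧
      (∀ S : Set ℚ, S ⊆ B → TwoSidedCrowded S → S ⊆ C) ∧
      C = ⋃₀ {S : Set ℚ | S ⊆ B ∧ TwoSidedCrowded S} ∧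
      ∃ P : Set ℚ, P ⊆ C ∧ P.Nonempty ∧ IsClosed P ∧ TwoSidedCrowded P :=
  stmt17_general B h
end

section
/- For every partition 𝒥 = {Jₙ : n < ω} of ω into consecutive finite intervals and every dominating (in the interval sense) family ⟨ℐ_α : α < ω₁⟩ of interval partitions, if for every partition 𝒥 there is α with (∀^∞ n)(∃k)(Jₙ ⊆ I_α^k ∪ I_α^{k+1}), then any ultrafilter u on ω satisfying (∀α < ω₁)(∃X ∈ u)(∀n)(|X ∩ I_α^n| ≤ 1) is a Q-point. -/
/-!
Given a partition of ω into finite pieces, choose an interval partition `e` whose endpoint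
`e (k + 1)` bounds every piece whose least element is below `e k`; then every piece lies in two
consecutive intervals of `e`. By hypothesis some `ℐ_α` covers almost every interval of `e` by two
of its own intervals, so almost every piece meets at most four consecutive intervals of `ℐ_α`.
Inside a set `X ∈ u` that selects from `ℐ_α`, the ultrafilter picks one residue class mod 4 of
the `ℐ_α`-index; it meets each such piece in at most one point. The finitely many remaining
pieces are discarded, which is possible unless `u` is principal, and then `u` is trivially a
Q-point.
-/

open Filter

/-- An interval partition of ω, given by its strictly increasing sequence of
left endpoints starting at 0; the `n`-th interval is `[e n, e (n+1))`. -/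
def IsIntervalPartition (e : ℕ → ℕ) : Prop := StrictMono e ∧ e 0 = 0

open Set Function

namespace IsIntervalPartition

def index (e : ℕ → ℕ) (x : ℕ) : ℕ := Nat.findGreatest (fun j => e j ≤ x) x

variable {e : ℕ → ℕ} (he : IsIntervalPartition e)
include he

lemma apply_index_le (x : ℕ) : e (index e x) ≤ x :=
  Nat.findGreatest_spec (P := fun j => e j ≤ x) (Nat.zero_le x) (by simp [he.2])

lemma lt_apply_index_succ (x : ℕ) : x < e (index e x + 1) := by
  by_contra! h
  exact Nat.findGreatest_is_greatest (Nat.lt_succ_self _) (he.1.le_apply.trans h) h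

lemma mem_Ico_index (x : ℕ) : x ∈ Ico (e (index e x)) (e (index e x + 1)) :=
  ⟨he.apply_index_le x, he.lt_apply_index_succ x⟩

lemma mem_Ico_iff_index {a b x : ℕ} :
    x ∈ Ico (e a) (e b) ↔ a ≤ index e x ∧ index e x < b := by
  have h₁ := he.apply_index_le x
  have h₂ := he.lt_apply_index_succ x
  constructor
  · rintro ⟨hax, hxb⟩
    exact ⟨Nat.lt_succ_iff.mp (he.1.lt_iff_lt.mp (hax.trans_lt h₂)),
      he.1.lt_iff_lt.mp (h₁.trans_lt hxb)⟩
  · rintro ⟨hax, hxb⟩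
    exact ⟨(he.1.monotone hax).trans h₁, h₂.trans_le (he.1.monotone hxb)⟩

lemma index_mono : Monotone (index e) := fun x y hxy =>
  ((he.mem_Ico_iff_index (a := index e x) (b := index e y + 1)).mp
    ⟨(he.apply_index_le x).trans hxy, he.lt_apply_index_succ y⟩).1

lemma index_succ_le (x : ℕ) : index e (x + 1) ≤ index e x + 1 :=
  Nat.lt_succ_iff.mp ((he.mem_Ico_iff_index (a := index e x) (b := index e x + 2)).mp
    ⟨(he.apply_index_le x).trans x.le_succ,
      (Nat.succ_le_of_lt (he.lt_apply_index_succ x)).trans_lt (he.1 (Nat.lt_succ_self _))⟩).2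

end IsIntervalPartition

open IsIntervalPartition

def absorbingPartition (B : ℕ → ℕ) : ℕ → ℕ
  | 0 => 0
  | k + 1 => max (absorbingPartition B k + 1) ((Finset.range (absorbingPartition B k)).sup B)

lemma exists_isIntervalPartition_bound_le (B : ℕ → ℕ) :
    ∃ e, IsIntervalPartition e ∧ ∀ k m, m < e k → B m ≤ e (k + 1) :=
  ⟨absorbingPartition B,
    ⟨strictMono_nat_of_lt_succ fun _ => Nat.lt_succ_self _ |>.trans_le (le_max_left _ _), rfl⟩,
    fun _ _ hm => (Finset.le_sup (Finset.mem_range.mpr hm)).trans (le_max_right _ _)⟩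

lemma exists_bound_of_pairwise_disjoint {p : ℕ → Set ℕ} (hfin : ∀ n, (p n).Finite)
    (hdisj : Pairwise (Disjoint on p)) :
    ∃ B : ℕ → ℕ, ∀ n, ∀ m ∈ p n, ∀ x ∈ p n, x < B m := by
  have hbound : ∀ m, ∃ b, ∀ n, m ∈ p n → ∀ x ∈ p n, x < b := by
    intro m
    by_cases hm : ∃ n, m ∈ p n
    · obtain ⟨n, hmn⟩ := hm
      obtain ⟨b, hb⟩ := (hfin n).bddAbove
      refine ⟨b + 1, fun n' hmn' x hx => Nat.lt_succ_of_le (hb ?_)⟩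
      obtain rfl : n' = n := by_contra fun hne => disjoint_left.mp (hdisj hne) hmn' hmn
      exact hx
    · exact ⟨0, fun n hmn => absurd ⟨n, hmn⟩ hm⟩
  choose B hB using hbound
  exact ⟨B, fun n m hm => hB m n hm⟩

lemma subset_Ico_index_of_isLeast {e B : ℕ → ℕ} (he : IsIntervalPartition e)
    (heB : ∀ k m, m < e k → B m ≤ e (k + 1)) {s : Set ℕ} {m : ℕ} (hm : IsLeast s m)
    (hs : ∀ x ∈ s, x < B m) : s ⊆ Ico (e (index e m)) (e (index e m + 2)) := fun x hx =>
  ⟨(he.apply_index_le m).trans (hm.2 hx),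
    (hs x hx).trans_le (heB _ m (he.lt_apply_index_succ m))⟩

lemma index_le_index_add_three {I e : ℕ → ℕ} (hI : IsIntervalPartition I) (he : StrictMono e)
    {k : ℕ} (hk : ∃ a, Ico (e k) (e (k + 1)) ⊆ Ico (I a) (I (a + 2)))
    (hk' : ∃ b, Ico (e (k + 1)) (e (k + 2)) ⊆ Ico (I b) (I (b + 2)))
    {x y : ℕ} (hx : x ∈ Ico (e k) (e (k + 2))) (hy : y ∈ Ico (e k) (e (k + 2))) :
    index I y ≤ index I x + 3 := by
  obtain ⟨a, ha⟩ := hk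
  obtain ⟨b, hb⟩ := hk'
  have hlt : e k < e (k + 1) := he (Nat.lt_succ_self k)
  have hlt' : e (k + 1) < e (k + 2) := he (Nat.lt_succ_self _)
  have hindex : ∀ z ∈ Ico (e k) (e (k + 2)),
      (a ≤ index I z ∧ index I z < a + 2) ∨ (b ≤ index I z ∧ index I z < b + 2) := by
    rintro z ⟨hz₁, hz₂⟩
    rcases lt_or_ge z (e (k + 1)) with hz | hz
    · exact Or.inl ((hI.mem_Ico_iff_index).mp (ha ⟨hz₁, hz⟩))
    · exact Or.inr ((hI.mem_Ico_iff_index).mp (hb ⟨hz, hz₂⟩))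
  -- the last point of the first interval and the first point of the second tie `a` to `b`
  have hlast := (hI.mem_Ico_iff_index).mp
    (ha (show e (k + 1) - 1 ∈ Ico (e k) (e (k + 1)) from ⟨by omega, by omega⟩))
  have hfirst := (hI.mem_Ico_iff_index).mp (hb ⟨le_rfl, hlt'⟩)
  have hstep₁ := hI.index_mono (Nat.sub_le (e (k + 1)) 1)
  have hstep₂ := hI.index_succ_le (e (k + 1) - 1)
  rw [Nat.sub_add_cancel (Nat.one_le_of_lt hlt)] at hstep₂
  have := hindex x hx
  have := hindex y hy
  omega

lemma index_eq_of_mod_four_eq {I e B : ℕ → ℕ} (hI : IsIntervalPartition I)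
    (he : IsIntervalPartition e) (heB : ∀ k m, m < e k → B m ≤ e (k + 1)) {N : ℕ}
    (hcover : ∀ k ≥ N, ∃ a, Ico (e k) (e (k + 1)) ⊆ Ico (I a) (I (a + 2)))
    {s : Set ℕ} (hs : ∀ m ∈ s, ∀ x ∈ s, x < B m) {x y : ℕ} (hx : x ∈ s) (hy : y ∈ s)
    (hxN : e (N + 1) ≤ x) (hmod : index I x % 4 = index I y % 4) : index I x = index I y := by
  have hm : IsLeast s (sInf s) := ⟨Nat.sInf_mem ⟨x, hx⟩, fun _ => Nat.sInf_le⟩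
  have hsub := subset_Ico_index_of_isLeast he heB hm (hs _ hm.1)
  set k := index e (sInf s)
  have hNk : N ≤ k := by
    by_contra! hkN
    exact absurd ((hsub hx).2.trans_le (he.1.monotone (by omega))) hxN.not_gt
  have hxy := index_le_index_add_three hI he.1 (hcover k hNk) (hcover (k + 1) (by omega))
    (hsub hx) (hsub hy)
  have hyx := index_le_index_add_three hI he.1 (hcover k hNk) (hcover (k + 1) (by omega))
    (hsub hy) (hsub hx)
  omega

lemma Ultrafilter.exists_eventually_mod_eq {α : Type*} (u : Ultrafilter α) (f : α → ℕ)
    (n : ℕ) [NeZero n] : ∃ j : Fin n, ∀ᶠ x in u, f x % n = j :=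
  Ultrafilter.eventually_exists_iff.mp
    (Eventually.of_forall fun x => ⟨⟨f x % n, Nat.mod_lt _ (NeZero.pos n)⟩, rfl⟩)

theorem stmt18_general
    (I : {o : Ordinal // o < (Cardinal.aleph 1).ord} → ℕ → ℕ)
    (hI : ∀ α, IsIntervalPartition (I α))
    (htwo : ∀ J : ℕ → ℕ, IsIntervalPartition J → ∃ α,
      ∀ᶠ n in atTop, ∃ k, Set.Ico (J n) (J (n + 1)) ⊆
        Set.Ico (I α k) (I α (k + 1)) ∪ Set.Ico (I α (k + 1)) (I α (k + 2)))
    (u : Ultrafilter ℕ)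
    (hu : ∀ α, ∃ X ∈ u, ∀ n, Set.Subsingleton (X ∩ Set.Ico (I α n) (I α (n + 1)))) :
    ∀ p : ℕ → Set ℕ, (∀ n, (p n).Finite) →
      (∀ n m, n ≠ m → Disjoint (p n) (p m)) → (⋃ n, p n) = Set.univ →
      ∃ X ∈ u, ∀ n, Set.Subsingleton (X ∩ p n) := by
  intro p hfin hdisj _
  rcases u.le_cofinite_or_eq_pure with hcof | ⟨a, rfl⟩
  swap
  · exact ⟨{a}, rfl, fun n => subsingleton_singleton.anti inter_subset_left⟩
  obtain ⟨B, hB⟩ := exists_bound_of_pairwise_disjoint hfin hdisj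
  obtain ⟨e, he, heB⟩ := exists_isIntervalPartition_bound_le B
  obtain ⟨α, hα⟩ := htwo e he
  obtain ⟨N, hN⟩ := eventually_atTop.mp hα
  have hcover : ∀ k ≥ N, ∃ a, Ico (e k) (e (k + 1)) ⊆ Ico (I α a) (I α (a + 2)) :=
    fun k hk => (hN k hk).imp fun a ha => by
      rwa [Ico_union_Ico_eq_Ico ((hI α).1.monotone a.le_succ)
        ((hI α).1.monotone (a + 1).le_succ)] at ha
  obtain ⟨X, hXu, hX⟩ := hu α
  obtain ⟨j, hj⟩ := u.exists_eventually_mod_eq (index (I α)) 4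
  have hlarge : ∀ᶠ x in u, e (N + 1) ≤ x :=
    hcof (Nat.cofinite_eq_atTop ▸ eventually_ge_atTop _)
  refine ⟨_, inter_mem (inter_mem hXu hj) hlarge,
    fun n x ⟨⟨⟨hxX, hxj⟩, hxN⟩, hxp⟩ y ⟨⟨⟨hyX, hyj⟩, _⟩, hyp⟩ => ?_⟩
  have hxy := index_eq_of_mod_four_eq (hI α) he heB hcover (hB n) hxp hyp hxN
    (hxj.trans hyj.symm)
  exact hX _ ⟨hxX, (hI α).mem_Ico_index x⟩ ⟨hyX, hxy ▸ (hI α).mem_Ico_index y⟩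

/-- If `⟨ℐ_α : α < ω₁⟩` is a dominating family of interval partitions such that
moreover every interval partition 𝒥 satisfies, for some α, that almost every
`Jₙ` is contained in a union of two consecutive intervals of `ℐ_α`, then every
ultrafilter `u` with `(∀ α)(∃ X ∈ u)(∀ n)(|X ∩ I_α^n| ≤ 1)` is a Q-point. -/
theorem stmt18
    (I : {o : Ordinal // o < (Cardinal.aleph 1).ord} → ℕ → ℕ)
    (hI : ∀ α, IsIntervalPartition (I α))
    (hdom : ∀ J : ℕ → ℕ, IsIntervalPartition J → ∃ α,
      ∀ᶠ n in atTop, ∃ k, Set.Ico (J k) (J (k + 1)) ⊆ Set.Ico (I α n) (I α (n + 1)))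
    (htwo : ∀ J : ℕ → ℕ, IsIntervalPartition J → ∃ α,
      ∀ᶠ n in atTop, ∃ k, Set.Ico (J n) (J (n + 1)) ⊆
        Set.Ico (I α k) (I α (k + 1)) ∪ Set.Ico (I α (k + 1)) (I α (k + 2)))
    (u : Ultrafilter ℕ)
    (hu : ∀ α, ∃ X ∈ u, ∀ n, Set.Subsingleton (X ∩ Set.Ico (I α n) (I α (n + 1)))) :
    ∀ p : ℕ → Set ℕ, (∀ n, (p n).Finite) →
      (∀ n m, n ≠ m → Disjoint (p n) (p m)) → (⋃ n, p n) = Set.univ →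
      ∃ X ∈ u, ∀ n, Set.Subsingleton (X ∩ p n) :=
  stmt18_general I hI htwo u hu
end
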